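/- arXiv:1612.06797 — 7 statements merged into one kernel-verified Lean document; each statement's English description precedes it below -/
import Mathlib

section
/- Every acyclic orientation of the complete bipartite graph K_{3,3} contains an alternating closed trail, i.e., a closed trail in which consecutive edges have opposite orientations. -/
/-- `D` is an orientation of the (undirected, symmetric) edge relation `E`:
every directed edge is an edge of the graph, every edge gets some direction,
and no edge gets both directions. -/
def IsOrientation {V : Type*} (E D : V → V → Prop) : Prop :=
  (∀ a b, D a b → E a b) ∧ (∀ a b, E a b → (D a b ∨ D b a)) ∧
    (∀ a b, ¬ (D a b ∧ D b a))

/-- The directed graph `D` contains a directed cycle. -/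
def HasDirectedCycle {V : Type*} (D : V → V → Prop) : Prop :=
  ∃ m : ℕ, 0 < m ∧ ∃ c : ZMod m → V, ∀ i, D (c i) (c (i + 1))

/-- The directed graph `D` contains an alternating closed trail: a closed trail
`top 0, bot 0, top 1, bot 1, …, top (k-1), bot (k-1)` in which consecutive
edges have opposite orientations (each `bot j` is the head of both of its trail
edges, each `top j` is the tail of both of its trail edges), and all (unordered)
edges of the trail are distinct. -/
def HasAltClosedTrail {V : Type*} (D : V → V → Prop) : Prop :=
  ∃ k : ℕ, 0 < k ∧ ∃ top bot : ZMod k → V,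
    (∀ j, D (top j) (bot j)) ∧ (∀ j, D (top (j + 1)) (bot j)) ∧
    (∀ (j j' : ZMod k) (s s' : Bool),
      (if s then top (j + 1) else top j) = (if s' then top (j' + 1) else top j') →
      bot j = bot j' → (j, s) = (j', s'))

/-!
Encode the orientation by the `3 × 3` Boolean matrix recording whether `inl i → inr j`.
A finite check shows that every such matrix has a `2 × 2` submatrix that is either constant,
giving two vertices on one side that both point to two vertices on the other side (an
alternating closed trail of length four), or a checkerboard, giving a directed `4`-cycle,
which acyclicity excludes.
-/

lemma IsOrientation.swap_iff_not {V : Type*} {E D : V → V → Prop} (hD : IsOrientation E D)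
    {a b : V} (hab : E a b) : D b a ↔ ¬ D a b :=
  ⟨fun hba hab' => hD.2.2 a b ⟨hab', hba⟩, fun h => (hD.2.1 a b hab).resolve_left h⟩

section FourCycles

variable {V : Type*} {D : V → V → Prop}

lemma hasDirectedCycle_of_cycle4 {a b c d : V} (hab : D a b) (hbc : D b c) (hcd : D c d)
    (hda : D d a) : HasDirectedCycle D := by
  refine ⟨4, by norm_num, ![a, b, c, d], fun i => ?_⟩
  fin_cases i <;> assumption

lemma hasAltClosedTrail_of_biclique {a b c d : V} (hab : a ≠ b) (hcd : c ≠ d)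
    (hac : D a c) (had : D a d) (hbc : D b c) (hbd : D b d) : HasAltClosedTrail D := by
  refine ⟨2, two_pos, ![a, b], ![c, d], fun j => ?_, fun j => ?_, fun j j' s s' => ?_⟩
  · fin_cases j <;> assumption
  · fin_cases j <;> assumption
  · have hZ2 (x : ZMod 2) : x = 0 ∨ x = 1 := by decide +revert
    rcases hZ2 j with rfl | rfl <;> rcases hZ2 j' with rfl | rfl <;> cases s <;> cases s' <;>
      simp [show (1 + 1 : ZMod 2) = 0 from rfl, hab, hab.symm, hcd, hcd.symm]

end FourCycles

set_option maxRecDepth 10000 in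
lemma exists_const_or_checkerboard_submatrix (f : Fin 3 → Fin 3 → Bool) :
    (∃ i i' j j', i ≠ i' ∧ j ≠ j' ∧ f i' j = f i j ∧ f i j' = f i j ∧ f i' j' = f i j) ∨
      ∃ i i' j j', f i j = true ∧ f i' j = false ∧ f i' j' = true ∧ f i j' = false := by
  revert f
  decide

/-- every acyclic orientation of `K_{3,3}` contains an alternating
closed trail. -/
theorem stmt_2 (D : Fin 3 ⊕ Fin 3 → Fin 3 ⊕ Fin 3 → Prop)
    (hor : IsOrientation
      (fun a b => (∃ x y, a = Sum.inl x ∧ b = Sum.inr y) ∨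
        (∃ x y, a = Sum.inr x ∧ b = Sum.inl y)) D)
    (hacyc : ¬ HasDirectedCycle D) :
    HasAltClosedTrail D := by
  classical
  set f : Fin 3 → Fin 3 → Bool := fun i j => decide (D (.inl i) (.inr j))
  have hT {i j} (h : f i j = true) : D (.inl i) (.inr j) := of_decide_eq_true h
  have hF {i j} (h : f i j = false) : D (.inr j) (.inl i) :=
    (hor.swap_iff_not (Or.inl ⟨i, j, rfl, rfl⟩)).2 (of_decide_eq_false h)
  rcases exists_const_or_checkerboard_submatrix f with
    ⟨i, i', j, j', hi, hj, h₁, h₂, h₃⟩ | ⟨i, i', j, j', h₁, h₂, h₃, h₄⟩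
  · have hi : (.inl i : Fin 3 ⊕ Fin 3) ≠ .inl i' := Sum.inl_injective.ne hi
    have hj : (.inr j : Fin 3 ⊕ Fin 3) ≠ .inr j' := Sum.inr_injective.ne hj
    cases hb : f i j
    · exact hasAltClosedTrail_of_biclique hj hi (hF hb) (hF (h₁.trans hb)) (hF (h₂.trans hb))
        (hF (h₃.trans hb))
    · exact hasAltClosedTrail_of_biclique hi hj (hT hb) (hT (h₂.trans hb)) (hT (h₁.trans hb))
        (hT (h₃.trans hb))
  · exact absurd (hasDirectedCycle_of_cycle4 (hT h₁) (hF h₂) (hT h₃) (hF h₄)) hacyc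
end

section
/- Let G be a graph on vertex set {1,…,n} with edge set S. Then G admits an acyclic orientation with no alternating closed trail if and only if there exists a permutation σ of {1,…,n} such that the edges {(min(σ(i),σ(j)), max(σ(i),σ(j))) : {i,j} ∈ S}, viewed as edges of the bipartite graph H_n with partite sets A = {1,…,n−1} and B = {2,…,n} (where a ∈ A is joined to b ∈ B iff a < b, with the edge {i,j}, i<j, sent to the pair (i ∈ A, j ∈ B)), form an acyclic subgraph (contain no cycle) of H_n. -/
/-! An acyclic orientation is the orientation by some linear order of the vertices, i.e. by a
relabeling `σ` (topological sort), and every relabeling gives an acyclic orientation. Oriented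
by `σ`, the edge `{i, i'}` runs from the smaller to the larger label, so it becomes the
`Hₙ`-edge `(min, max)`; an alternating closed trail of the orientation is thereby the same as a
closed trail in the image subgraph of `Hₙ`. A closed trail contains a cycle: a shortest one
repeats no vertex, since at a repeated vertex it splits off a shorter closed trail. -/

open Function

theorem ZMod.apply_val_add_one {α : Type*} {m : ℕ} [NeZero m] {f : ℕ → α} (hf : f m = f 0)
    (i : ZMod m) : f (i + 1).val = f (i.val + 1) := by
  have hval : (i + 1).val = (i.val + 1) % m := by
    rw [ZMod.val_add, ZMod.val_one_eq_one_mod, Nat.add_mod_mod]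
  rcases (show i.val + 1 ≤ m from ZMod.val_lt i).lt_or_eq with h | h
  · rw [hval, Nat.mod_eq_of_lt h]
  · rw [hval, h, Nat.mod_self, hf]

section DirectedCycle

variable {V : Type*} {D : V → V → Prop}

theorem hasDirectedCycle_of_transGen {x : V} (h : Relation.TransGen D x x) :
    HasDirectedCycle D := by
  obtain ⟨y, hxy, hyx⟩ := Relation.TransGen.head'_iff.1 h
  obtain ⟨l, hyl, hlast⟩ := List.exists_isChain_cons_of_relationReflTransGen hyx
  have hchain : List.IsChain D (x :: y :: l) := hyl.cons_cons hxy
  let f : ℕ → V := fun i => (x :: y :: l).getD i x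
  have hf : f (l.length + 1) = f 0 := by
    simp [f, ← hlast, List.getLast_eq_getElem]
  refine ⟨l.length + 1, l.length.succ_pos, fun i => f i.val, fun i => ?_⟩
  change D (f i.val) (f (i + 1).val)
  rw [ZMod.apply_val_add_one hf]
  have hi := ZMod.val_lt i
  simp only [f]
  rw [List.getD_eq_getElem _ _ (by simp; omega), List.getD_eq_getElem _ _ (by simp; omega)]
  exact hchain.getElem i.val (by simp; omega)

theorem not_hasDirectedCycle_of_lt {α : Type*} [LinearOrder α] (f : V → α)
    (hf : ∀ x y, D x y → f x < f y) : ¬ HasDirectedCycle D := by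
  rintro ⟨m, hm, c, hc⟩
  have : NeZero m := ⟨hm.ne'⟩
  obtain ⟨i, hi⟩ := Finite.exists_max (f ∘ c)
  exact (hf _ _ (hc i)).not_ge (hi (i + 1))

theorem exists_equiv_fin_lt_of_not_hasDirectedCycle [Fintype V] {n : ℕ}
    (hV : Fintype.card V = n) (h : ¬ HasDirectedCycle D) :
    ∃ σ : V ≃ Fin n, ∀ x y, D x y → σ x < σ y := by
  let _ : PartialOrder V :=
    { le := Relation.ReflTransGen D
      le_refl := fun _ => Relation.ReflTransGen.refl
      le_trans := fun _ _ _ => Relation.ReflTransGen.trans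
      le_antisymm := fun x y hxy hyx => by
        rcases Relation.reflTransGen_iff_eq_or_transGen.1 hxy with rfl | hxy
        · rfl
        rcases Relation.reflTransGen_iff_eq_or_transGen.1 hyx with rfl | hyx
        · rfl
        exact (h (hasDirectedCycle_of_transGen (hxy.trans hyx))).elim }
  have hlt : ∀ x y, D x y → x < y := fun x y hxy =>
    lt_of_le_of_ne (Relation.ReflTransGen.single hxy)
      (by rintro rfl; exact h (hasDirectedCycle_of_transGen (.single hxy)))
  let _ : Fintype (LinearExtension V) := inferInstanceAs (Fintype V)
  let e := (Fintype.orderIsoFinOfCardEq (LinearExtension V) hV).symm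
  have hmono : StrictMono (toLinearExtension : V →o LinearExtension V) :=
    toLinearExtension.monotone.strictMono_of_injective fun _ _ h => h
  exact ⟨e.toEquiv, fun x y hxy => e.strictMono (hmono (hlt x y hxy))⟩

end DirectedCycle

section AltClosedTrail

variable {V : Type*} {k : ℕ}

def altEdge (a b : ZMod k → V) (p : ZMod k × Bool) : V × V :=
  (if p.2 then a (p.1 + 1) else a p.1, b p.1)

def IsAltClosedTrail (R : V → V → Prop) (a b : ZMod k → V) : Prop :=
  (∀ j, R (a j) (b j)) ∧ (∀ j, R (a (j + 1)) (b j)) ∧ Injective (altEdge a b)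

/-- A cycle of the bipartite graph whose parts are two copies of `V`, with `x` in the first
joined to `y` in the second when `R x y`. -/
def HasBipartiteCycle (R : V → V → Prop) : Prop :=
  ∃ k, 2 ≤ k ∧ ∃ a b : ZMod k → V, Injective a ∧ Injective b ∧
    ∀ j, R (a j) (b j) ∧ R (a (j + 1)) (b j)

theorem hasAltClosedTrail_iff {R : V → V → Prop} :
    HasAltClosedTrail R ↔ ∃ k, 0 < k ∧ ∃ a b : ZMod k → V, IsAltClosedTrail R a b := by
  refine exists_congr fun k => and_congr_right fun _ => exists₂_congr fun a b =>
    and_congr_right fun _ => and_congr_right fun _ => ?_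
  simp only [Injective, altEdge, Prod.forall, Prod.mk.injEq, and_imp]
  exact ⟨fun h j s j' s' => h j j' s s', fun h j j' s s' => h j s j' s'⟩

namespace IsAltClosedTrail

variable {R : V → V → Prop} {a b : ZMod k → V}

theorem one_ne_zero (h : IsAltClosedTrail R a b) : (1 : ZMod k) ≠ 0 := by
  intro h10
  have := @h.2.2 (0, false) (0, true) (by simp [altEdge, h10])
  simp at this

theorem two_le [NeZero k] (h : IsAltClosedTrail R a b) : 2 ≤ k := by
  rcases k with _ | _ | k
  · exact absurd rfl (NeZero.ne 0)
  · exact absurd rfl h.one_ne_zero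
  · omega

theorem map {W : Type*} {S : W → W → Prop} {g : V → W} (h : IsAltClosedTrail R a b)
    (hg : Injective g) (hRS : ∀ x y, R x y → S (g x) (g y)) :
    IsAltClosedTrail S (g ∘ a) (g ∘ b) := by
  refine ⟨fun j => hRS _ _ (h.1 j), fun j => hRS _ _ (h.2.1 j), ?_⟩
  have hedge : altEdge (g ∘ a) (g ∘ b) = Prod.map g g ∘ altEdge a b := by
    ext ⟨j, _ | _⟩ <;> rfl
  rw [hedge]
  exact (hg.prodMap hg).comp h.2.2

theorem swap (h : IsAltClosedTrail R a b) :
    IsAltClosedTrail (flip R) b (fun j => a (j + 1)) := by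
  refine ⟨h.2.1, fun j => h.1 (j + 1), ?_⟩
  have hedge : altEdge b (fun j => a (j + 1)) =
      Prod.swap ∘ altEdge a b ∘ fun p => if p.2 then (p.1 + 1, false) else (p.1, true) := by
    ext ⟨j, _ | _⟩ <;> rfl
  rw [hedge]
  refine Prod.swap_injective.comp (h.2.2.comp ?_)
  rintro ⟨j, _ | _⟩ ⟨j', _ | _⟩ hjj <;> simp_all

theorem restrict {m : ℕ} [NeZero m] (h : IsAltClosedTrail R a b) (hmk : m ≤ k) (s : ZMod k)
    (hs : a (s + m) = a s) :
    IsAltClosedTrail R (fun i : ZMod m => a (s + i.val)) (fun i => b (s + i.val)) := by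
  have ha : ∀ i : ZMod m, a (s + (i + 1).val) = a (s + i.val + 1) := by
    intro i
    simpa [add_assoc] using ZMod.apply_val_add_one (f := fun x : ℕ => a (s + x)) (by simpa) i
  have hinj : Injective fun i : ZMod m => s + (i.val : ZMod k) := by
    intro u v huv
    have := congrArg ZMod.val (add_left_cancel huv)
    rw [ZMod.val_cast_of_lt ((ZMod.val_lt u).trans_le hmk),
      ZMod.val_cast_of_lt ((ZMod.val_lt v).trans_le hmk)] at this
    exact ZMod.val_injective _ this
  have hedge : altEdge (fun i : ZMod m => a (s + i.val)) (fun i => b (s + i.val)) =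
      altEdge a b ∘ Prod.map (fun i : ZMod m => s + (i.val : ZMod k)) id := by
    ext ⟨i, _ | _⟩ <;> simp only [altEdge, comp_apply, Prod.map_fst, Prod.map_snd, id_eq,
      Bool.false_eq_true, if_false, if_true, ha]
  refine ⟨fun i => h.1 _, fun i => ?_, ?_⟩
  · simpa only [ha] using h.2.1 (s + i.val)
  · rw [hedge]
    exact h.2.2.comp (hinj.prodMap injective_id)

theorem exists_shorter_of_not_injective_left [NeZero k] (h : IsAltClosedTrail R a b)
    (ha : ¬ Injective a) :
    ∃ m, 0 < m ∧ m < k ∧ ∃ a' b' : ZMod m → V, IsAltClosedTrail R a' b' := by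
  obtain ⟨j₁, j₂, heq, hne⟩ := Function.not_injective_iff.1 ha
  have hm : 0 < (j₂ - j₁).val := ZMod.val_pos.2 (sub_ne_zero.2 hne.symm)
  have : NeZero (j₂ - j₁).val := ⟨hm.ne'⟩
  refine ⟨_, hm, ZMod.val_lt _, _, _, h.restrict (ZMod.val_lt _).le j₁ ?_⟩
  rw [ZMod.natCast_zmod_val, add_sub_cancel, heq]

theorem exists_shorter_of_not_injective_right [NeZero k] (h : IsAltClosedTrail R a b)
    (hb : ¬ Injective b) :
    ∃ m, 0 < m ∧ m < k ∧ ∃ a' b' : ZMod m → V, IsAltClosedTrail R a' b' := by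
  obtain ⟨m, hm, hmk, a', b', h'⟩ := h.swap.exists_shorter_of_not_injective_left hb
  exact ⟨m, hm, hmk, _, _, h'.swap⟩

end IsAltClosedTrail

theorem isAltClosedTrail_of_injective {R : V → V → Prop} {a b : ZMod k → V} (hk : 2 ≤ k)
    (ha : Injective a) (hb : Injective b) (hR : ∀ j, R (a j) (b j) ∧ R (a (j + 1)) (b j)) :
    IsAltClosedTrail R a b := by
  refine ⟨fun j => (hR j).1, fun j => (hR j).2, ?_⟩
  have : Fact (1 < k) := ⟨hk⟩
  rintro ⟨j, s⟩ ⟨j', s'⟩ hjj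
  simp only [altEdge, Prod.mk.injEq] at hjj
  obtain rfl := hb hjj.2
  cases s <;> cases s' <;> simp_all [ha.eq_iff]

theorem hasBipartiteCycle_iff_hasAltClosedTrail {R : V → V → Prop} :
    HasBipartiteCycle R ↔ HasAltClosedTrail R := by
  classical
  rw [hasAltClosedTrail_iff]
  constructor
  · rintro ⟨k, hk, a, b, ha, hb, hR⟩
    exact ⟨k, by omega, a, b, isAltClosedTrail_of_injective hk ha hb hR⟩
  · intro hex
    obtain ⟨hk, a, b, h⟩ := Nat.find_spec hex
    have hmin : ∀ m, 0 < m → m < Nat.find hex →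
        ¬ ∃ a' b' : ZMod m → V, IsAltClosedTrail R a' b' :=
      fun m hm hmk h' => Nat.find_min hex hmk ⟨hm, h'⟩
    have : NeZero (Nat.find hex) := ⟨hk.ne'⟩
    refine ⟨_, h.two_le, a, b, ?_, ?_, fun j => ⟨h.1 j, h.2.1 j⟩⟩
    · by_contra ha
      obtain ⟨m, hm, hmk, h'⟩ := h.exists_shorter_of_not_injective_left ha
      exact hmin m hm hmk h'
    · by_contra hb
      obtain ⟨m, hm, hmk, h'⟩ := h.exists_shorter_of_not_injective_right hb
      exact hmin m hm hmk h'

end AltClosedTrail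

theorem HasAltClosedTrail.map {V W : Type*} {R : V → V → Prop} {S : W → W → Prop}
    {g : V → W} (h : HasAltClosedTrail R) (hg : Injective g)
    (hRS : ∀ x y, R x y → S (g x) (g y)) :
    HasAltClosedTrail S := by
  rw [hasAltClosedTrail_iff] at h ⊢
  obtain ⟨k, hk, a, b, h⟩ := h
  exact ⟨k, hk, _, _, h.map hg hRS⟩

section Orientation

variable {V W : Type*} [LinearOrder W] {E : V → V → Prop}

def minMaxImage (σ : V → W) (E : V → V → Prop) (x y : W) : Prop :=
  ∃ i i', E i i' ∧ x = min (σ i) (σ i') ∧ y = max (σ i) (σ i')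

theorem minMaxImage_of_lt {σ : V → W} {i i' : V} (hE : E i i') (h : σ i < σ i') :
    minMaxImage σ E (σ i) (σ i') :=
  ⟨i, i', hE, (min_eq_left h.le).symm, (max_eq_right h.le).symm⟩

theorem IsOrientation.apply_symm_of_minMaxImage {D : V → V → Prop} (hD : IsOrientation E D)
    (σ : V ≃ W) (hσ : ∀ x y, D x y → σ x < σ y) {x y : W} (h : minMaxImage σ E x y) :
    D (σ.symm x) (σ.symm y) := by
  obtain ⟨i, i', hE, rfl, rfl⟩ := h
  rcases hD.2.1 i i' hE with hii' | hi'i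
  · have := hσ _ _ hii'
    simpa [min_eq_left this.le, max_eq_right this.le] using hii'
  · have := hσ _ _ hi'i
    simpa [min_eq_right this.le, max_eq_left this.le] using hi'i

theorem isOrientation_lt_of_injective (hsym : ∀ a b, E a b → E b a) (hirr : ∀ a, ¬ E a a)
    {σ : V → W} (hσ : Injective σ) : IsOrientation E fun i i' => E i i' ∧ σ i < σ i' := by
  refine ⟨fun _ _ h => h.1, fun i i' hE => ?_, fun i i' h => lt_asymm h.1.2 h.2.2⟩
  have hne : σ i ≠ σ i' := hσ.ne fun h => hirr i (h ▸ hE)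
  rcases hne.lt_or_gt with h | h
  · exact Or.inl ⟨hE, h⟩
  · exact Or.inr ⟨hsym _ _ hE, h⟩

end Orientation

/-- a graph `E` on `{1,…,n}` admits an acyclic orientation with no
alternating closed trail iff some relabeling `σ` of the vertices sends its edge
set to an acyclic (cycle-free) subgraph of the bipartite graph `Hₙ` with parts
`A = {1,…,n−1}`, `B = {2,…,n}` and edges `(a,b)` for `a < b`; the edge `{i,j}`
is sent to the `Hₙ`-edge `(min(σi,σj), max(σi,σj))`.  A cycle in `Hₙ` is a
closed alternating sequence `b 0, a 0, b 1, a 1, …` of ≥ 2 distinct `A`-vertices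
and ≥ 2 distinct `B`-vertices in which consecutive vertices are joined by edges
of the subgraph. -/
theorem stmt_3 (n : ℕ) (E : Fin n → Fin n → Prop)
    (hsym : ∀ a b, E a b → E b a) (hirr : ∀ a, ¬ E a a) :
    (∃ D, IsOrientation E D ∧ ¬ HasDirectedCycle D ∧ ¬ HasAltClosedTrail D) ↔
    ∃ σ : Equiv.Perm (Fin n),
      ¬ ∃ k : ℕ, 2 ≤ k ∧ ∃ a b : ZMod k → Fin n,
        Function.Injective a ∧ Function.Injective b ∧
        ∀ j, (∃ i i', E i i' ∧ a j = min (σ i) (σ i') ∧ b j = max (σ i) (σ i')) ∧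
          (∃ i i', E i i' ∧ a (j + 1) = min (σ i) (σ i') ∧ b j = max (σ i) (σ i')) := by
  constructor
  · rintro ⟨D, hD, hacyclic, hnotrail⟩
    obtain ⟨σ, hσ⟩ :=
      exists_equiv_fin_lt_of_not_hasDirectedCycle (Fintype.card_fin n) hacyclic
    refine ⟨σ, fun hcycle => hnotrail ?_⟩
    exact (hasBipartiteCycle_iff_hasAltClosedTrail (R := minMaxImage σ E)).1 hcycle
      |>.map σ.symm.injective fun _ _ => hD.apply_symm_of_minMaxImage σ hσ
  · rintro ⟨σ, hnocycle⟩
    refine ⟨_, isOrientation_lt_of_injective hsym hirr σ.injective,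
      not_hasDirectedCycle_of_lt σ fun _ _ h => h.2, fun htrail => hnocycle ?_⟩
    exact hasBipartiteCycle_iff_hasAltClosedTrail.2
      (htrail.map σ.injective fun _ _ h => minMaxImage_of_lt h.1 h.2)
end

section
/- Let S ⊆ {(i,j) : 1 ≤ i < j ≤ n}. The set of vectors {e_i + f_j : (i,j) ∈ S} in ℝⁿ ⊕ ℝⁿ (where e_i denotes the i-th standard basis vector of the first summand and f_j of the second) is linearly independent if and only if the graph on vertex set {1,…,n} with edge set S contains no closed trail v₀, v₁, …, v_{2k−1}, v₀ of even length in which v_{2i−1} < v_{2i} and v_{2i+1} < v_{2i} for all i (indices mod 2k). -/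
lemma aux_trail {n k : ℕ} {S : Set (Fin n × Fin n)} (hk : 2 ≤ k) (x : ℕ → Fin n)
    (hcyc : x (2 * k) = x 0)
    (hinjx : ∀ a b, a < 2 * k → b < 2 * k → a % 2 = b % 2 → x a = x b → a = b)
    (he : ∀ i < k, (x (2 * i + 1), x (2 * i)) ∈ S)
    (ho : ∀ i < k, (x (2 * i + 1), x (2 * i + 2)) ∈ S) :
    ∃ k' : ℕ, 0 < k' ∧ ∃ top bot : ZMod k' → Fin n,
      (∀ j, (bot j, top j) ∈ S) ∧ (∀ j, (bot j, top (j + 1)) ∈ S) ∧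
      (∀ (j j' : ZMod k') (s s' : Bool),
        (if s then top (j + 1) else top j) = (if s' then top (j' + 1) else top j') →
        bot j = bot j' → (j, s) = (j', s')) := by
  haveI : NeZero k := ⟨by omega⟩
  haveI : Fact (1 < k) := ⟨by omega⟩
  have hval : ∀ j : ZMod k, (j + 1).val = (j.val + 1) % k := by
    intro j
    rw [ZMod.val_add, ZMod.val_one]
  refine ⟨k, by omega, fun j => x (2 * j.val), fun j => x (2 * j.val + 1), ?_, ?_, ?_⟩
  · exact fun j => he j.val (ZMod.val_lt j)
  · intro j
    show (x (2 * j.val + 1), x (2 * (j+1).val)) ∈ S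
    rw [hval j]
    rcases Nat.lt_or_ge (j.val + 1) k with h | h
    case inr =>
      have h : j.val + 1 = k := by have := ZMod.val_lt j; omega
      rw [h, Nat.mod_self, mul_zero, ← hcyc]
      have := ho j.val (ZMod.val_lt j)
      rwa [show 2 * j.val + 2 = 2 * k by omega] at this
    case inl =>
      rw [Nat.mod_eq_of_lt h, show 2 * (j.val + 1) = 2 * j.val + 2 by ring]
      exact ho j.val (ZMod.val_lt j)
  · intro j j' s s' htop hbot
    have hvlt : ∀ j : ZMod k, j.val < k := fun j => ZMod.val_lt j
    have hbot' : 2 * j.val + 1 = 2 * j'.val + 1 :=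
      hinjx _ _ (by have := hvlt j; omega) (by have := hvlt j'; omega) (by omega) hbot
    have hj : j = j' := ZMod.val_injective k (by omega)
    subst hj
    have htop' : (if s then 2 * ((j.val + 1) % k) else 2 * j.val) =
        (if s' then 2 * ((j.val + 1) % k) else 2 * j.val) := by
      apply hinjx
      · have := hvlt j; have := Nat.mod_lt (j.val + 1) (show 0 < k by omega); cases s <;> simp <;> omega
      · have := hvlt j; have := Nat.mod_lt (j.val + 1) (show 0 < k by omega); cases s' <;> simp <;> omega
      · cases s <;> cases s' <;> simp <;> omega
      · cases s <;> cases s' <;> simpa [hval] using htop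
    have hmod : (j.val + 1) % k ≠ j.val := by
      rcases Nat.lt_or_ge (j.val + 1) k with h | h
      · rw [Nat.mod_eq_of_lt h]; omega
      · have hh : j.val + 1 = k := by have := hvlt j; omega
        rw [hh, Nat.mod_self]; omega
    have hss : s = s' := by
      cases s <;> cases s' <;> simp at htop' ⊢ <;> omega
    rw [hss]

/-- for `S ⊆ {(i,j) : i < j}`, the vectors `e_i + f_j`, `(i,j) ∈ S`,
in `ℝⁿ ⊕ ℝⁿ` are linearly independent iff the graph with edge set `S` has no
closed trail `v₀, …, v_{2k−1}` (indices mod `2k`, all edges distinct) with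
`v_{2i−1} < v_{2i}` and `v_{2i+1} < v_{2i}` for all `i`.  The trail is encoded
by its local maxima `top j = v_{2j}` and local minima `bot j = v_{2j+1}`; its
edges are the pairs `(bot j, top j)` and `(bot j, top (j+1))`. -/
theorem stmt_4 (n : ℕ) (S : Set (Fin n × Fin n)) (hS : ∀ p ∈ S, p.1 < p.2) :
    LinearIndependent ℝ
      (fun p : S =>
        ((Pi.single (p : Fin n × Fin n).1 1, Pi.single (p : Fin n × Fin n).2 1) :
          (Fin n → ℝ) × (Fin n → ℝ))) ↔
    ¬ ∃ k : ℕ, 0 < k ∧ ∃ top bot : ZMod k → Fin n,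
      (∀ j, (bot j, top j) ∈ S) ∧ (∀ j, (bot j, top (j + 1)) ∈ S) ∧
      (∀ (j j' : ZMod k) (s s' : Bool),
        (if s then top (j + 1) else top j) = (if s' then top (j' + 1) else top j') →
        bot j = bot j' → (j, s) = (j', s')) := by
  constructor
  · intro hli
    rintro ⟨k, hk, top, bot, h1, h2, hinj⟩
    haveI : NeZero k := ⟨hk.ne'⟩
    set g : ZMod k × Bool → S := fun js =>
      if hs : js.2 then ⟨(bot js.1, top (js.1 + 1)), h2 js.1⟩ else ⟨(bot js.1, top js.1), h1 js.1⟩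
      with hg_def
    have hgval : ∀ j s, ((g (j, s) : Fin n × Fin n)) = (bot j, if s then top (j + 1) else top j) := by
      intro j s; cases s <;> rfl
    have hg : Function.Injective g := by
      rintro ⟨j, s⟩ ⟨j', s'⟩ h
      have h' := congrArg (fun e : S => (e : Fin n × Fin n)) h
      simp only [hgval, Prod.mk.injEq] at h'
      exact hinj j j' s s' h'.2 h'.1
    have hli2 := hli.comp g hg
    rw [Fintype.linearIndependent_iff] at hli2
    have h0 := hli2 (fun js => if js.2 then (-1 : ℝ) else 1) ?_
    · have := h0 (0, false); simp at this
    · have hsum : ∀ js : ZMod k × Bool,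
          (if js.2 then (-1 : ℝ) else 1) •
            ((Pi.single ((g js : Fin n × Fin n)).1 1, Pi.single ((g js : Fin n × Fin n)).2 1) :
              (Fin n → ℝ) × (Fin n → ℝ)) =
          ((if js.2 then (-1 : ℝ) else 1) • (Pi.single (bot js.1) 1 : Fin n → ℝ),
           (if js.2 then (-1 : ℝ) else 1) •
             (Pi.single (if js.2 then top (js.1 + 1) else top js.1) 1 : Fin n → ℝ)) := by
        rintro ⟨j, s⟩
        rw [hgval j s]
        rfl
      calc ∑ js : ZMod k × Bool, (if js.2 then (-1 : ℝ) else 1) •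
            ((Pi.single ((g js : Fin n × Fin n)).1 1, Pi.single ((g js : Fin n × Fin n)).2 1) :
              (Fin n → ℝ) × (Fin n → ℝ))
          = ∑ js : ZMod k × Bool,
            (((if js.2 then (-1 : ℝ) else 1) • (Pi.single (bot js.1) 1 : Fin n → ℝ),
             (if js.2 then (-1 : ℝ) else 1) •
               (Pi.single (if js.2 then top (js.1 + 1) else top js.1) 1 : Fin n → ℝ)) :
              (Fin n → ℝ) × (Fin n → ℝ)) := Finset.sum_congr rfl (fun js _ => hsum js)
        _ = 0 := by
          rw [Prod.ext_iff]
          constructor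
          · rw [Prod.fst_sum]
            simp only [Fintype.sum_prod_type_right, Fintype.sum_bool]
            simp
          · have hre : ∑ x : ZMod k, (Pi.single (top (x + 1)) 1 : Fin n → ℝ)
                = ∑ x : ZMod k, (Pi.single (top x) 1 : Fin n → ℝ) :=
              Fintype.sum_equiv (Equiv.addRight 1) _ _ (fun x => rfl)
            rw [Prod.snd_sum]
            simp only [Fintype.sum_prod_type_right, Fintype.sum_bool, if_true,
              Bool.false_eq_true, if_false, neg_smul, one_smul]
            rw [Finset.sum_neg_distrib, hre]
            simp
  · intro hnt
    classical
    rw [linearIndependent_iff]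
    intro l hl0
    by_contra hlne
    apply hnt
    have hl0' : ∑ e ∈ l.support, l e •
        ((Pi.single ((e : Fin n × Fin n)).1 1, Pi.single ((e : Fin n × Fin n)).2 1) :
          (Fin n → ℝ) × (Fin n → ℝ)) = 0 := by
      rw [← hl0, Finsupp.linearCombination_apply, Finsupp.sum]
    -- degree ≥ 2 claims
    have key1 : ∀ e : S, e ∈ l.support → ∃ e', e' ∈ l.support ∧ e' ≠ e ∧
        ((e : Fin n × Fin n)).1 = ((e' : Fin n × Fin n)).1 := by
      intro e he
      by_contra hcon
      push_neg at hcon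
      have hfil : l.support.filter (fun x : {x : Fin n × Fin n // x ∈ S} => (e : Fin n × Fin n).1 = (x : Fin n × Fin n).1)
          = {e} := by
        apply Finset.eq_singleton_iff_unique_mem.mpr
        refine ⟨Finset.mem_filter.mpr ⟨he, rfl⟩, ?_⟩
        intro x hx
        rcases Finset.mem_filter.mp hx with ⟨hx1, hx2⟩
        by_contra hne
        exact hcon x hx1 hne hx2
      have hz : ∑ x ∈ l.support.filter
          (fun x : {x : Fin n × Fin n // x ∈ S} => (e : Fin n × Fin n).1 = (x : Fin n × Fin n).1), l x = 0 := by
        have hcomp := congrArg (fun z : (Fin n → ℝ) × (Fin n → ℝ) =>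
          z.1 ((e : Fin n × Fin n).1)) hl0'
        simp only [Prod.fst_sum, Finset.sum_apply, Prod.smul_fst, Pi.smul_apply,
          smul_eq_mul, Pi.single_apply, Prod.fst_zero, Pi.zero_apply,
          mul_ite, mul_one, mul_zero] at hcomp
        rw [Finset.sum_filter]
        exact hcomp
      rw [hfil, Finset.sum_singleton] at hz
      exact Finsupp.mem_support_iff.mp he hz
    have key2 : ∀ e : S, e ∈ l.support → ∃ e', e' ∈ l.support ∧ e' ≠ e ∧
        ((e : Fin n × Fin n)).2 = ((e' : Fin n × Fin n)).2 := by
      intro e he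
      by_contra hcon
      push_neg at hcon
      have hfil : l.support.filter (fun x : {x : Fin n × Fin n // x ∈ S} => (e : Fin n × Fin n).2 = (x : Fin n × Fin n).2)
          = {e} := by
        apply Finset.eq_singleton_iff_unique_mem.mpr
        refine ⟨Finset.mem_filter.mpr ⟨he, rfl⟩, ?_⟩
        intro x hx
        rcases Finset.mem_filter.mp hx with ⟨hx1, hx2⟩
        by_contra hne
        exact hcon x hx1 hne hx2
      have hz : ∑ x ∈ l.support.filter
          (fun x : {x : Fin n × Fin n // x ∈ S} => (e : Fin n × Fin n).2 = (x : Fin n × Fin n).2), l x = 0 := by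
        have hcomp := congrArg (fun z : (Fin n → ℝ) × (Fin n → ℝ) =>
          z.2 ((e : Fin n × Fin n).2)) hl0'
        simp only [Prod.snd_sum, Finset.sum_apply, Prod.smul_snd, Pi.smul_apply,
          smul_eq_mul, Pi.single_apply, Prod.snd_zero, Pi.zero_apply,
          mul_ite, mul_one, mul_zero] at hcomp
        rw [Finset.sum_filter]
        exact hcomp
      rw [hfil, Finset.sum_singleton] at hz
      exact Finsupp.mem_support_iff.mp he hz
    -- the walk
    obtain ⟨e₀, he₀⟩ : l.support.Nonempty := Finsupp.support_nonempty_iff.mpr hlne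
    have key : ∀ (r : ℕ) (e : {x : S // x ∈ l.support}), ∃ e' : {x : S // x ∈ l.support},
        e' ≠ e ∧ (if r % 2 = 0 then ((e : S) : Fin n × Fin n).1 = ((e' : S) : Fin n × Fin n).1
          else ((e : S) : Fin n × Fin n).2 = ((e' : S) : Fin n × Fin n).2) := by
      intro r e
      by_cases hr : r % 2 = 0
      · obtain ⟨e', h1, h2, h3⟩ := key1 e.1 e.2
        exact ⟨⟨e', h1⟩, fun hcon => h2 (congrArg Subtype.val hcon), by rw [if_pos hr]; exact h3⟩
      · obtain ⟨e', h1, h2, h3⟩ := key2 e.1 e.2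
        exact ⟨⟨e', h1⟩, fun hcon => h2 (congrArg Subtype.val hcon), by rw [if_neg hr]; exact h3⟩
    choose F hFne hFco using key
    set f : ℕ → {x : S // x ∈ l.support} :=
      fun r => Nat.rec ⟨e₀, he₀⟩ (fun r prev => F r prev) r with hf
    have hfsucc : ∀ r, f (r + 1) = F r (f r) := fun r => rfl
    set u : ℕ → Fin n := fun r => if r % 2 = 0 then ((f r : S) : Fin n × Fin n).1
      else ((f r : S) : Fin n × Fin n).2 with hu
    have hne : ∀ r, f (r + 1) ≠ f r := fun r => by rw [hfsucc]; exact hFne r (f r)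
    have hpair : ∀ r, ((f (r + 1) : S) : Fin n × Fin n)
        = if r % 2 = 0 then (u r, u (r + 1)) else (u (r + 1), u r) := by
      intro r
      have hco := hFco r (f r)
      rw [← hfsucc r] at hco
      by_cases hr : r % 2 = 0
      · rw [if_pos hr] at hco ⊢
        have h1 : (r + 1) % 2 ≠ 0 := by omega
        apply Prod.ext
        · rw [← hco]; simp only [hu, if_pos hr]
        · simp only [hu, if_neg h1]
      · rw [if_neg hr] at hco ⊢
        have h1 : (r + 1) % 2 = 0 := by omega
        apply Prod.ext
        · simp only [hu, if_pos h1]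
        · rw [← hco]; simp only [hu, if_neg hr]
    -- pigeonhole
    have hP : ∃ b : ℕ, ∃ a, a < b ∧ a % 2 = b % 2 ∧ u a = u b := by
      obtain ⟨a, b, hab, h⟩ := Finite.exists_ne_map_eq_of_infinite
        (fun r : ℕ => ((u r, decide (r % 2 = 0)) : Fin n × Bool))
      have h1 : u a = u b := congrArg Prod.fst h
      have h2 : (a % 2 = 0) ↔ (b % 2 = 0) := by
        have := congrArg Prod.snd h
        simpa using this
      rcases Nat.lt_or_ge a b with hlt | hge
      · exact ⟨b, a, hlt, by omega, h1⟩
      · exact ⟨a, b, by omega, by omega, h1.symm⟩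
    set m' := Nat.find hP with hm'def
    obtain ⟨m, hmlt, hmpar, hmu⟩ := Nat.find_spec hP
    have uinj : ∀ a b, a < b → b < m' → a % 2 = b % 2 → u a = u b → False :=
      fun a b h1 h2 h3 h4 => Nat.find_min hP h2 ⟨a, h1, h3, h4⟩
    obtain ⟨k, hm2k⟩ : ∃ k, m' = m + 2 * k := ⟨(m' - m) / 2, by omega⟩
    have humm : u (m + 2 * k) = u m := by rw [← hm2k]; exact hmu.symm
    have hk2 : 2 ≤ k := by
      by_contra hcon
      have hk1' : k = 1 := by omega
      have h1 := hpair m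
      have h2 := hpair (m + 1)
      have humm2 : u (m + 2) = u m := by rw [hk1'] at humm; simpa using humm
      apply hne (m + 1)
      apply Subtype.ext; apply Subtype.ext
      by_cases hm : m % 2 = 0
      · rw [if_pos hm] at h1
        rw [if_neg (by omega)] at h2
        rw [show m + 1 + 1 = m + 2 by ring] at h2
        rw [h1, h2, humm2]
      · rw [if_neg hm] at h1
        rw [if_pos (by omega)] at h2
        rw [show m + 1 + 1 = m + 2 by ring] at h2
        rw [h1, h2, humm2]
    -- case on parity of m
    by_cases hm : m % 2 = 0
    · -- even case : x i = u (m + (i+1) % (2k))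
      apply aux_trail (n := n) hk2 (fun i => u (m + (i + 1) % (2 * k)))
      · show u (m + (2 * k + 1) % (2 * k)) = u (m + (0 + 1) % (2 * k))
        congr 1
        have h1 : (2 * k + 1) % (2 * k) = 1 := by
          rw [Nat.add_mod_left, Nat.mod_eq_of_lt (by omega)]
        have h2 : (0 + 1) % (2 * k) = 1 := Nat.mod_eq_of_lt (by omega)
        omega
      · intro a b ha hb hpar hxeq
        have hmod : ∀ c, c < 2 * k → (c + 1) % (2 * k) = if c = 2 * k - 1 then 0 else c + 1 := by
          intro c hc
          by_cases hc' : c = 2 * k - 1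
          · rw [if_pos hc', hc', show 2 * k - 1 + 1 = 2 * k by omega, Nat.mod_self]
          · rw [if_neg hc', Nat.mod_eq_of_lt (by omega)]
        have hxeq' : u (m + (a + 1) % (2 * k)) = u (m + (b + 1) % (2 * k)) := hxeq
        rw [hmod a ha, hmod b hb] at hxeq'
        by_contra hab
        split_ifs at hxeq' with h1 h2 h2
        · omega
        · rw [show m + 0 = m by ring] at hxeq'
          exact uinj m (m + (b + 1)) (by omega) (by omega) (by omega) hxeq'
        · rw [show m + 0 = m by ring] at hxeq'
          exact uinj m (m + (a + 1)) (by omega) (by omega) (by omega) hxeq'.symm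
        · rcases lt_trichotomy a b with h | h | h
          · exact uinj (m + (a + 1)) (m + (b + 1)) (by omega) (by omega) (by omega) hxeq'
          · exact hab h
          · exact uinj (m + (b + 1)) (m + (a + 1)) (by omega) (by omega) (by omega) hxeq'.symm
      · intro i hi
        show (u (m + (2 * i + 1 + 1) % (2 * k)), u (m + (2 * i + 1) % (2 * k))) ∈ S
        rw [show 2 * i + 1 + 1 = 2 * i + 2 by ring,
            Nat.mod_eq_of_lt (show 2 * i + 1 < 2 * k by omega)]
        rcases Nat.lt_or_ge (2 * i + 2) (2 * k) with h | h
        · rw [Nat.mod_eq_of_lt h]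
          have hp := hpair (m + (2 * i + 1))
          rw [if_neg (by omega)] at hp
          rw [show m + (2 * i + 1) + 1 = m + (2 * i + 2) by ring] at hp
          rw [← hp]
          exact ((f (m + (2 * i + 1) + 1)) : S).2
        · have hi2 : 2 * i + 2 = 2 * k := by omega
          rw [hi2, Nat.mod_self]
          have hp := hpair (m + (2 * k - 1))
          rw [if_neg (by omega)] at hp
          rw [show m + (2 * k - 1) + 1 = m + 2 * k by omega, humm] at hp
          rw [show 2 * i + 1 = 2 * k - 1 by omega, show m + 0 = m by ring, ← hp]
          exact ((f (m + 2 * k)) : S).2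
      · intro i hi
        show (u (m + (2 * i + 1 + 1) % (2 * k)), u (m + (2 * i + 2 + 1) % (2 * k))) ∈ S
        rw [show 2 * i + 1 + 1 = 2 * i + 2 by ring, show 2 * i + 2 + 1 = 2 * i + 3 by ring]
        rcases Nat.lt_or_ge (2 * i + 2) (2 * k) with h | h
        · rw [Nat.mod_eq_of_lt (show 2 * i + 2 < 2 * k from h),
              Nat.mod_eq_of_lt (show 2 * i + 3 < 2 * k by omega)]
          have hp := hpair (m + (2 * i + 2))
          rw [if_pos (by omega)] at hp
          rw [show m + (2 * i + 2) + 1 = m + (2 * i + 3) by ring] at hp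
          rw [← hp]
          exact ((f (m + (2 * i + 2) + 1)) : S).2
        · have hi2 : 2 * i + 2 = 2 * k := by omega
          rw [hi2, Nat.mod_self, show 2 * i + 3 = 2 * k + 1 by omega, Nat.add_mod_left,
              Nat.mod_eq_of_lt (show 1 < 2 * k by omega), show m + 0 = m by ring]
          have hp := hpair m
          rw [if_pos hm] at hp
          rw [← hp]
          exact ((f (m + 1)) : S).2
    · -- odd case : x i = u (m + i % (2k))
      apply aux_trail (n := n) hk2 (fun i => u (m + i % (2 * k)))
      · show u (m + 2 * k % (2 * k)) = u (m + 0 % (2 * k))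
        congr 1
        have h1 : 2 * k % (2 * k) = 0 := Nat.mod_self _
        have h2 : 0 % (2 * k) = 0 := Nat.zero_mod _
        omega
      · intro a b ha hb hpar hxeq
        have hxeq' : u (m + a % (2 * k)) = u (m + b % (2 * k)) := hxeq
        rw [Nat.mod_eq_of_lt ha, Nat.mod_eq_of_lt hb] at hxeq'
        by_contra hab
        rcases lt_trichotomy a b with h | h | h
        · exact uinj (m + a) (m + b) (by omega) (by omega) (by omega) hxeq'
        · exact hab h
        · exact uinj (m + b) (m + a) (by omega) (by omega) (by omega) hxeq'.symm
      · intro i hi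
        show (u (m + (2 * i + 1) % (2 * k)), u (m + (2 * i) % (2 * k))) ∈ S
        rw [Nat.mod_eq_of_lt (show 2 * i + 1 < 2 * k by omega),
            Nat.mod_eq_of_lt (show 2 * i < 2 * k by omega)]
        have hp := hpair (m + 2 * i)
        rw [if_neg (by omega)] at hp
        rw [show m + 2 * i + 1 = m + (2 * i + 1) by ring] at hp
        rw [← hp]
        exact ((f (m + 2 * i + 1)) : S).2
      · intro i hi
        show (u (m + (2 * i + 1) % (2 * k)), u (m + (2 * i + 2) % (2 * k))) ∈ S
        rw [Nat.mod_eq_of_lt (show 2 * i + 1 < 2 * k by omega)]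
        rcases Nat.lt_or_ge (2 * i + 2) (2 * k) with h | h
        · rw [Nat.mod_eq_of_lt h]
          have hp := hpair (m + (2 * i + 1))
          rw [if_pos (by omega)] at hp
          rw [show m + (2 * i + 1) + 1 = m + (2 * i + 2) by ring] at hp
          rw [← hp]
          exact ((f (m + (2 * i + 1) + 1)) : S).2
        · have hi2 : 2 * i + 2 = 2 * k := by omega
          rw [hi2, Nat.mod_self, show m + 0 = m by ring]
          have hp := hpair (m + (2 * i + 1))
          rw [if_pos (by omega)] at hp
          rw [show m + (2 * i + 1) + 1 = m + 2 * k by omega, humm] at hp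
          rw [← hp]
          exact ((f (m + 2 * k)) : S).2
end

section
/- Let T be a tree with positive weights on internal edges and arbitrary real weights on leaf edges, with leaves labeled by a finite set X, and let d(x,y) be the sum of edge weights along the unique path from leaf x to leaf y. Then d satisfies the four-point condition: for all distinct i, j, k, l ∈ X, d(i,j) + d(k,l) ≤ max(d(i,k) + d(j,l), d(i,l) + d(j,k)). -/
/-!
In a tree the path from `x` to `y` uses exactly the edges whose deletion separates `x` from `y`,
so `d x y` is the total weight of those edges and the four-point inequality can be checked edge
by edge. A leaf edge separates a pair exactly when the pair contains its leaf, so it contributes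
equally to all three pairings of four distinct vertices, whatever the sign of its weight. An
internal edge has positive weight and splits the vertices into two sides; it contributes more to
`d i j + d k l` than to `d i k + d j l` only if it induces the split `i k | j l`, and no edges
induce both `i k | j l` and `i l | j k`. Comparing with the pairing whose split does not occur
gives the inequality.
-/

namespace SimpleGraph

variable {V : Type*} {G : SimpleGraph V}

def Separates (G : SimpleGraph V) (e : Sym2 V) (x y : V) : Prop :=
  ¬ (G.deleteEdges {e}).Reachable x y

theorem separates_comm {e : Sym2 V} {x y : V} : G.Separates e x y ↔ G.Separates e y x :=
  not_congr reachable_comm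

theorem IsAcyclic.mem_edges_iff_separates (hG : G.IsAcyclic) {e : Sym2 V} {x y : V}
    {p : G.Walk x y} (hp : p.IsPath) : e ∈ p.edges ↔ G.Separates e x y := by
  refine ⟨fun he hxy => ?_, p.mem_edges_of_not_reachable_deleteEdges⟩
  obtain ⟨q, hq⟩ := hxy.exists_isPath
  have hpq : p = q.mapLe (deleteEdges_le _) :=
    congrArg Subtype.val ((hG.subsingleton_path x y).elim ⟨p, hp⟩ ⟨_, hq.mapLe _⟩)
  rw [hpq, Walk.edges_mapLe_eq_edges] at he
  have := q.edges_subset_edgeSet he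
  rw [edgeSet_deleteEdges] at this
  exact this.2 rfl

theorem Walk.reachable_deleteEdges_or {x y : V} (p : G.Walk x y) (u v : V) :
    (G.deleteEdges {s(u, v)}).Reachable x y ∨ (G.deleteEdges {s(u, v)}).Reachable x u ∨
      (G.deleteEdges {s(u, v)}).Reachable x v := by
  induction p with
  | nil => exact Or.inl .rfl
  | @cons a b c hab q ih =>
    by_cases hedge : s(a, b) = s(u, v)
    · rcases Sym2.eq_iff.mp hedge with ⟨rfl, -⟩ | ⟨rfl, -⟩
      exacts [Or.inr (Or.inl .rfl), Or.inr (Or.inr .rfl)]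
    · have hab' : (G.deleteEdges {s(u, v)}).Adj a b := deleteEdges_adj.mpr ⟨hab, hedge⟩
      exact ih.imp hab'.reachable.trans (Or.imp hab'.reachable.trans hab'.reachable.trans)

/-- Deleting an edge `s(u, v)` of a tree leaves two components, that of `u` and that of `v`. -/
theorem IsTree.separates_iff (hG : G.IsTree) {u v : V} (huv : G.Adj u v) (x y : V) :
    G.Separates s(u, v) x y ↔
      ¬ ((G.deleteEdges {s(u, v)}).Reachable x u ↔ (G.deleteEdges {s(u, v)}).Reachable y u) := by
  have hbridge : ¬ (G.deleteEdges {s(u, v)}).Reachable u v :=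
    isBridge_iff.mp (isAcyclic_iff_forall_adj_isBridge.mp hG.isAcyclic huv)
  have hside : ∀ z, (G.deleteEdges {s(u, v)}).Reachable z u ∨
      (G.deleteEdges {s(u, v)}).Reachable z v := fun z => by
    obtain ⟨p⟩ := hG.1.preconnected z u
    simpa using p.reachable_deleteEdges_or u v
  unfold Separates
  refine not_congr ⟨fun h => ⟨h.symm.trans, h.trans⟩, fun h => ?_⟩
  rcases hside x with hx | hx
  · exact hx.trans (h.mp hx).symm
  rcases hside y with hy | hy
  · exact absurd ((h.mpr hy).symm.trans hx) hbridge
  · exact hx.trans hy.symm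

theorem eq_of_reachable_deleteEdges_of_degree_eq_one [Fintype V] [DecidableRel G.Adj]
    {t u x : V} (ht : G.degree t = 1) (htu : G.Adj t u)
    (h : (G.deleteEdges {s(t, u)}).Reachable x t) : x = t := by
  obtain ⟨p⟩ := h.symm
  cases p with
  | nil => rfl
  | cons hadj =>
    obtain ⟨htb, hne⟩ := deleteEdges_adj.mp hadj
    obtain ⟨_, -, huniq⟩ := degree_eq_one_iff_existsUnique_adj.mp ht
    exact (hne (by rw [huniq _ htb, huniq _ htu]; rfl)).elim

theorem IsTree.separates_iff_of_degree_eq_one [Fintype V] [DecidableRel G.Adj] (hG : G.IsTree)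
    {t u x y : V} (ht : G.degree t = 1) (htu : G.Adj t u) (hxy : x ≠ y) :
    G.Separates s(t, u) x y ↔ x = t ∨ y = t := by
  have hleaf : ∀ z, (G.deleteEdges {s(t, u)}).Reachable z t ↔ z = t := fun z =>
    ⟨eq_of_reachable_deleteEdges_of_degree_eq_one ht htu, fun h => h ▸ .rfl⟩
  rw [hG.separates_iff htu, hleaf, hleaf]
  grind


/-- `e` induces the split `x y | z t` on these four vertices. -/
def SeparatesPairs (G : SimpleGraph V) (e : Sym2 V) (x y z t : V) : Prop :=
  ¬ G.Separates e x y ∧ ¬ G.Separates e z t ∧ G.Separates e x z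

theorem SeparatesPairs.not_separatesPairs {e f : Sym2 V} {i j k l : V}
    (he : G.SeparatesPairs e i k j l) : ¬ G.SeparatesPairs f i l j k := by
  classical
  obtain ⟨hik, hjl, hij⟩ := he
  rintro ⟨hil, hjk, hij'⟩
  simp only [Separates, not_not] at hik hjl hil hjk
  have hf_ik : G.Separates f i k := fun h => hij' (h.trans hjk.symm)
  have hf_jl : G.Separates f j l := fun h => hij' (hil.trans h.symm)
  induction f using Sym2.ind with
  | _ u v =>
  have hreach : ∀ {a b : V}, (G.deleteEdges {e}).Reachable a b → G.Separates s(u, v) a b →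
      (G.deleteEdges {e}).Reachable a u := fun ⟨p⟩ hsep => by
    have hmem := (p.mapLe (deleteEdges_le _)).mem_edges_of_not_reachable_deleteEdges hsep
    rw [Walk.edges_mapLe_eq_edges] at hmem
    exact ⟨p.takeUntil u (p.fst_mem_support_of_mem_edges hmem)⟩
  exact hij ((hreach hik hf_ik).trans (hreach hjl hf_jl).symm)

open Classical in
theorem IsTree.four_point_edge_of_degree_eq_one [Fintype V] [DecidableRel G.Adj]
    (hG : G.IsTree) (c : ℝ) {t u i j k l : V} (ht : G.degree t = 1) (htu : G.Adj t u)
    (hij : i ≠ j) (hik : i ≠ k) (hil : i ≠ l) (hjk : j ≠ k) (hjl : j ≠ l) (hkl : k ≠ l) :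
    ((if G.Separates s(t, u) i j then c else 0) + if G.Separates s(t, u) k l then c else 0) =
      (if G.Separates s(t, u) i k then c else 0) + if G.Separates s(t, u) j l then c else 0 := by
  simp only [hG.separates_iff_of_degree_eq_one ht htu, hij, hkl, hik, hjl, ne_eq,
    not_false_eq_true]
  split_ifs <;> grind


open Classical in
theorem IsTree.four_point_edge_of_pos (hG : G.IsTree) {c : ℝ} (hc : 0 < c) {u v i j k l : V}
    (huv : G.Adj u v) (hsplit : ¬ G.SeparatesPairs s(u, v) i k j l) :
    ((if G.Separates s(u, v) i j then c else 0) + if G.Separates s(u, v) k l then c else 0) ≤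
      (if G.Separates s(u, v) i k then c else 0) + if G.Separates s(u, v) j l then c else 0 := by
  simp only [SeparatesPairs, hG.separates_iff huv] at hsplit ⊢
  split_ifs <;> first | linarith | tauto

open Classical in
theorem IsTree.four_point_edge [Fintype V] [DecidableRel G.Adj] (hG : G.IsTree)
    {w : Sym2 V → ℝ} {e : Sym2 V} (he : e ∈ G.edgeSet)
    (hw : (∀ v ∈ e, G.degree v ≠ 1) → 0 < w e) {i j k l : V}
    (hij : i ≠ j) (hik : i ≠ k) (hil : i ≠ l) (hjk : j ≠ k) (hjl : j ≠ l) (hkl : k ≠ l)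
    (hsplit : ¬ G.SeparatesPairs e i k j l) :
    ((if G.Separates e i j then w e else 0) + if G.Separates e k l then w e else 0) ≤
      (if G.Separates e i k then w e else 0) + if G.Separates e j l then w e else 0 := by
  induction e using Sym2.ind with
  | _ u v =>
  have huv : G.Adj u v := he
  by_cases hu : G.degree u = 1
  · exact (hG.four_point_edge_of_degree_eq_one _ hu huv hij hik hil hjk hjl hkl).le
  by_cases hv : G.degree v = 1
  · rw [Sym2.eq_swap]
    exact (hG.four_point_edge_of_degree_eq_one _ hv huv.symm hij hik hil hjk hjl hkl).le
  exact hG.four_point_edge_of_pos (hw (by simp [hu, hv])) huv hsplit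

open Classical in
noncomputable def cutWeight (G : SimpleGraph V) [Fintype G.edgeSet] (w : Sym2 V → ℝ)
    (x y : V) : ℝ :=
  ∑ e ∈ G.edgeFinset with G.Separates e x y, w e

theorem cutWeight_comm [Fintype G.edgeSet] (w : Sym2 V → ℝ) (x y : V) :
    G.cutWeight w x y = G.cutWeight w y x := by
  classical
  unfold cutWeight
  congr 1
  exact Finset.filter_congr fun _ _ => separates_comm

theorem IsAcyclic.sum_edges_eq_cutWeight [Fintype G.edgeSet] (hG : G.IsAcyclic)
    (w : Sym2 V → ℝ) {x y : V} {p : G.Walk x y} (hp : p.IsPath) :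
    (p.edges.map w).sum = G.cutWeight w x y := by
  classical
  rw [cutWeight, ← List.sum_toFinset w hp.isTrail.edges_nodup]
  congr 1
  ext e
  simp only [List.mem_toFinset, Finset.mem_filter, mem_edgeFinset, ← hG.mem_edges_iff_separates hp]
  exact ⟨fun he => ⟨p.edges_subset_edgeSet he, he⟩, And.right⟩

theorem IsTree.cutWeight_add_le [Fintype V] [DecidableRel G.Adj] (hG : G.IsTree)
    {w : Sym2 V → ℝ} (hw : ∀ e ∈ G.edgeSet, (∀ v ∈ e, G.degree v ≠ 1) → 0 < w e) {i j k l : V}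
    (hij : i ≠ j) (hik : i ≠ k) (hil : i ≠ l) (hjk : j ≠ k) (hjl : j ≠ l) (hkl : k ≠ l)
    (hsplit : ∀ e ∈ G.edgeSet, ¬ G.SeparatesPairs e i k j l) :
    G.cutWeight w i j + G.cutWeight w k l ≤ G.cutWeight w i k + G.cutWeight w j l := by
  simp only [cutWeight, Finset.sum_filter, ← Finset.sum_add_distrib]
  refine Finset.sum_le_sum fun e he => ?_
  rw [mem_edgeFinset] at he
  exact hG.four_point_edge he (hw e he) hij hik hil hjk hjl hkl (hsplit e he)

theorem IsTree.cutWeight_four_point [Fintype V] [DecidableRel G.Adj] (hG : G.IsTree)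
    {w : Sym2 V → ℝ} (hw : ∀ e ∈ G.edgeSet, (∀ v ∈ e, G.degree v ≠ 1) → 0 < w e) {i j k l : V}
    (hij : i ≠ j) (hik : i ≠ k) (hil : i ≠ l) (hjk : j ≠ k) (hjl : j ≠ l) (hkl : k ≠ l) :
    G.cutWeight w i j + G.cutWeight w k l ≤
      max (G.cutWeight w i k + G.cutWeight w j l) (G.cutWeight w i l + G.cutWeight w j k) := by
  by_cases h : ∃ e ∈ G.edgeSet, G.SeparatesPairs e i k j l
  · obtain ⟨e, -, he⟩ := h
    have := hG.cutWeight_add_le hw hij hil hik hjl hjk hkl.symm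
      fun f _ => he.not_separatesPairs
    rw [cutWeight_comm w l k] at this
    exact this.trans (le_max_right _ _)
  · push Not at h
    exact (hG.cutWeight_add_le hw hij hik hil hjk hjl hkl h).trans (le_max_left _ _)

end SimpleGraph

theorem stmt_11_general {V : Type*} [Fintype V] (G : SimpleGraph V) [DecidableRel G.Adj]
    (hG : G.IsTree) (w : Sym2 V → ℝ)
    (hw : ∀ e ∈ G.edgeSet, (∀ v ∈ e, G.degree v ≠ 1) → 0 < w e)
    (d : V → V → ℝ)
    (hd : ∀ (x y : V) (p : G.Walk x y), p.IsPath → d x y = (p.edges.map w).sum)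
    (i j k l : V)
    (hij : i ≠ j) (hik : i ≠ k) (hil : i ≠ l)
    (hjk : j ≠ k) (hjl : j ≠ l) (hkl : k ≠ l) :
    d i j + d k l ≤ max (d i k + d j l) (d i l + d j k) := by
  classical
  have hdist : ∀ x y, d x y = G.cutWeight w x y := fun x y => by
    obtain ⟨p, hp⟩ := hG.1.exists_isPath x y
    rw [hd x y p hp, hG.isAcyclic.sum_edges_eq_cutWeight w hp]
  simp only [hdist]
  exact hG.cutWeight_four_point hw hij hik hil hjk hjl hkl

/-- a distance function obtained from an edge-weighted tree
(positive weights on internal edges, arbitrary real weights on leaf edges,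
`d x y` = sum of the weights along the unique path between leaves `x`,`y`)
satisfies the four-point condition on distinct leaves.  Leaves are the
degree-one vertices. -/
theorem stmt_11 {V : Type*} [Fintype V] (G : SimpleGraph V) [DecidableRel G.Adj]
    (hG : G.IsTree) (w : Sym2 V → ℝ)
    (hw : ∀ e ∈ G.edgeSet, (∀ v ∈ e, G.degree v ≠ 1) → 0 < w e)
    (d : V → V → ℝ)
    (hd : ∀ (x y : V) (p : G.Walk x y), p.IsPath → d x y = (p.edges.map w).sum)
    (i j k l : V)
    (hi : G.degree i = 1) (hj : G.degree j = 1)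
    (hk : G.degree k = 1) (hl : G.degree l = 1)
    (hij : i ≠ j) (hik : i ≠ k) (hil : i ≠ l)
    (hjk : j ≠ k) (hjl : j ≠ l) (hkl : k ≠ l) :
    d i j + d k l ≤ max (d i k + d j l) (d i l + d j k) :=
  stmt_11_general G hG w hw d hd i j k l hij hik hil hjk hjl hkl
end

section
/- Let d be a tree metric realized by the caterpillar tree Cat(n) (the binary tree with cherries {1,2} and {n−1,n} and remaining leaves 3, …, n−2 attached in increasing order along the central path), with strictly positive internal edge weights. Then for every quadruple i < j < k < l one has d_{ij} + d_{kl} < d_{ik} + d_{jl} and d_{ik} + d_{jl} = d_{il} + d_{jk}. -/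
/-!
All leaves of a caterpillar hang off one path, so a leaf-to-leaf distance is the two leaf edges
plus the path segment between the attachment points. Both `d i k + d j l` and `d i l + d j k`
then cover the segments between `i, j` and between `k, l` once and the segment between `j, k`
twice, whereas `d i j + d k l` misses the latter; since `2 ≤ j < k ≤ n - 1`, that segment contains an internal
edge, whose weight is positive.
-/

open Finset

section IntervalSums

variable (t : ℕ → ℝ) {a b c e : ℕ}

theorem sum_Ico_add_sum_Ico_eq_of_le (hab : a ≤ b) (hbc : b ≤ c) (hce : c ≤ e) :
    ∑ m ∈ Ico a c, t m + ∑ m ∈ Ico b e, t m = ∑ m ∈ Ico a e, t m + ∑ m ∈ Ico b c, t m := by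
  rw [← sum_Ico_consecutive t hab hbc, ← sum_Ico_consecutive t hbc hce,
    ← sum_Ico_consecutive t hab (hbc.trans hce), ← sum_Ico_consecutive t hbc hce]
  ring

theorem sum_Ico_add_sum_Ico_add_two_mul_of_le (hab : a ≤ b) (hbc : b ≤ c) (hce : c ≤ e) :
    ∑ m ∈ Ico a b, t m + ∑ m ∈ Ico c e, t m + 2 * ∑ m ∈ Ico b c, t m
      = ∑ m ∈ Ico a c, t m + ∑ m ∈ Ico b e, t m := by
  rw [← sum_Ico_consecutive t hab hbc, ← sum_Ico_consecutive t hbc hce]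
  ring

end IntervalSums

theorem four_point_of_monotone_path {x t : ℕ → ℝ} {p : ℕ → ℕ} (hp : Monotone p)
    {d : ℕ → ℕ → ℝ} (hd : ∀ i j, i < j → d i j = x i + x j + ∑ m ∈ Ico (p i) (p j), t m)
    {i j k l : ℕ} (hij : i < j) (hjk : j < k) (hkl : k < l) :
    d i j + d k l + 2 * ∑ m ∈ Ico (p j) (p k), t m = d i k + d j l ∧
      d i k + d j l = d i l + d j k := by
  have hij' := hp hij.le
  have hjk' := hp hjk.le
  have hkl' := hp hkl.le
  have hsplit := sum_Ico_add_sum_Ico_add_two_mul_of_le t hij' hjk' hkl'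
  have hswap := sum_Ico_add_sum_Ico_eq_of_le t hij' hjk' hkl'
  rw [hd i j hij, hd k l hkl, hd i k (hij.trans hjk), hd j l (hjk.trans hkl),
    hd i l (hij.trans (hjk.trans hkl)), hd j k hjk]
  constructor <;> linarith

def caterpillarPos (n i : ℕ) : ℕ :=
  if i ≤ 2 then 1 else if i ≤ n - 2 then i - 1 else n - 2

section Caterpillar

variable {n : ℕ}

theorem caterpillarPos_monotone (hn : 3 ≤ n) : Monotone (caterpillarPos n) := by
  intro a b hab
  unfold caterpillarPos
  split_ifs <;> omega

theorem one_le_caterpillarPos (hn : 3 ≤ n) (i : ℕ) : 1 ≤ caterpillarPos n i := by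
  unfold caterpillarPos
  split_ifs <;> omega

theorem caterpillarPos_le (hn : 3 ≤ n) (i : ℕ) : caterpillarPos n i ≤ n - 2 := by
  unfold caterpillarPos
  split_ifs <;> omega

theorem caterpillarPos_lt_caterpillarPos {j k : ℕ} (hj : 2 ≤ j) (hjk : j < k) (hk : k < n) :
    caterpillarPos n j < caterpillarPos n k := by
  unfold caterpillarPos
  split_ifs <;> omega

theorem sum_Ico_caterpillarPos_pos (hn : 3 ≤ n) {t : ℕ → ℝ}
    (ht : ∀ m, 1 ≤ m → m ≤ n - 3 → 0 < t m) {j k : ℕ} (hj : 2 ≤ j) (hjk : j < k) (hk : k < n) :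
    0 < ∑ m ∈ Ico (caterpillarPos n j) (caterpillarPos n k), t m := by
  have hlt := caterpillarPos_lt_caterpillarPos hj hjk hk
  refine sum_pos (fun m hm ↦ ?_) (nonempty_Ico.mpr hlt)
  have hm := mem_Ico.mp hm
  have := one_le_caterpillarPos hn j
  have := caterpillarPos_le hn k
  exact ht m (by omega) (by omega)

end Caterpillar

/-- a tree metric realized by the caterpillar `Cat(n)` with
strictly positive internal edge weights satisfies, for `i < j < k < l`,
`d_ij + d_kl < d_ik + d_jl = d_il + d_jk`.  The caterpillar is parameterized
explicitly: its internal path vertices are `c_1, …, c_{n−2}` joined by internal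
edges `t_1, …, t_{n−3}` (`t_m` between `c_m` and `c_{m+1}`); leaf `i` is
attached at `c_{pos i}` by a leaf edge of arbitrary weight `x i`, where
`pos 1 = pos 2 = 1`, `pos i = i − 1` for `3 ≤ i ≤ n−2` and
`pos (n−1) = pos n = n − 2`; thus for `i < j` the tree metric is
`d i j = x i + x j + ∑_{m = pos i}^{pos j − 1} t m`. -/
theorem stmt_12 (n : ℕ) (hn : 4 ≤ n)
    (x t : ℕ → ℝ) (ht : ∀ m, 1 ≤ m → m ≤ n - 3 → 0 < t m)
    (pos : ℕ → ℕ)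
    (hpos : ∀ i, pos i = if i ≤ 2 then 1 else if i ≤ n - 2 then i - 1 else n - 2)
    (d : ℕ → ℕ → ℝ)
    (hd : ∀ i j, i < j → d i j = x i + x j + ∑ m ∈ Finset.Ico (pos i) (pos j), t m)
    (i j k l : ℕ) (h1 : 1 ≤ i) (hij : i < j) (hjk : j < k) (hkl : k < l) (hln : l ≤ n) :
    d i j + d k l < d i k + d j l ∧ d i k + d j l = d i l + d j k := by
  obtain rfl : pos = caterpillarPos n := funext hpos
  have hn3 : 3 ≤ n := by omega
  obtain ⟨hsplit, hswap⟩ := four_point_of_monotone_path (caterpillarPos_monotone hn3) hd hij hjk hkl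
  have hmid := sum_Ico_caterpillarPos_pos hn3 ht (by omega : 2 ≤ j) hjk (by omega : k < n)
  exact ⟨by linarith, hswap⟩
end

section
/- Let S ⊆ {(i,j) : 1 ≤ i < j ≤ n} be a set of edges such that the vectors {e_i + f_j : (i,j) ∈ S} ⊂ ℝⁿ ⊕ ℝⁿ are linearly independent (e_i, f_j standard basis vectors of the two summands). Then |S| ≤ 2n − 3, and for every subset W ⊆ {1,…,n} with |W| = k ≥ 2, the number of edges of S with both endpoints in W is at most 2k − 3. -/
/-!
If every edge `(i, j)` of `T` has `i < j` with both ends in `W`, then `i ≠ max W` and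
`j ≠ min W`, so `e_i + f_j` lies in the span `U` of the `e_i` (`i ∈ W \ {max W}`) and the
`f_j` (`j ∈ W \ {min W}`), of dimension at most `2 #W - 2`. It also lies in the kernel of
`x ↦ ∑ x.1 - ∑ x.2`, which does not contain `e_{min W} ∈ U`. Hence independent edge vectors
inside `W` number at most `dim (U ∩ ker) ≤ 2 #W - 3`.
-/

open Finset Module Submodule

section LinearAlgebra

variable {K M ι : Type*} [Field K] [AddCommGroup M] [Module K M]

theorem finrank_inf_ker_lt {U : Submodule K M} [FiniteDimensional K U] {φ : M →ₗ[K] K} {x : M}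
    (hx : x ∈ U) (hφx : φ x ≠ 0) : finrank K ↥(U ⊓ LinearMap.ker φ) < finrank K U :=
  Submodule.finrank_lt_finrank_of_lt <|
    inf_le_left.lt_of_ne fun h => hφx (h.ge hx).2

theorem LinearIndepOn.finset_card_le_finrank_of_forall_mem {v : ι → M} {s : Finset ι}
    (hv : LinearIndepOn K v (s : Set ι)) {P : Submodule K M} [FiniteDimensional K P]
    (hP : ∀ i ∈ s, v i ∈ P) : #s ≤ finrank K P := by
  have hspan : span K (Set.range fun i : (s : Set ι) => v i) ≤ P :=
    span_le.2 <| Set.range_subset_iff.2 fun i => hP i i.2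
  calc #s = Fintype.card (s : Set ι) := by simp
    _ = finrank K (span K (Set.range fun i : (s : Set ι) => v i)) := (finrank_span_eq_card hv).symm
    _ ≤ finrank K P := Submodule.finrank_mono hspan

end LinearAlgebra

section CoordSumDiff

variable (K : Type*) {ι : Type*} [Field K] [Fintype ι]

def coordSumDiff : (ι → K) × (ι → K) →ₗ[K] K :=
  LinearMap.coprod (∑ i, LinearMap.proj i) (-∑ i, LinearMap.proj i)

variable {K}

theorem coordSumDiff_apply (x : (ι → K) × (ι → K)) :
    coordSumDiff K x = ∑ i, x.1 i - ∑ i, x.2 i := by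
  simp [coordSumDiff, sub_eq_add_neg]

end CoordSumDiff

section EdgeVectors

variable (K : Type*) {ι : Type*} [Field K] [DecidableEq ι]

def edgeVector (p : ι × ι) : (ι → K) × (ι → K) := (Pi.single p.1 1, Pi.single p.2 1)

def coordSpan (s t : Finset ι) : Submodule K ((ι → K) × (ι → K)) :=
  span K (Set.range (Sum.elim (fun i : s => (Pi.single (i : ι) 1, 0))
    (fun j : t => (0, Pi.single (j : ι) 1))))

variable {K}

theorem finrank_coordSpan_le (s t : Finset ι) : finrank K (coordSpan K s t) ≤ #s + #t :=
  (finrank_range_le_card _).trans (by simp)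

theorem single_zero_mem_coordSpan {s : Finset ι} (t : Finset ι) {i : ι} (hi : i ∈ s) :
    ((Pi.single i 1, 0) : (ι → K) × (ι → K)) ∈ coordSpan K s t :=
  subset_span ⟨Sum.inl ⟨i, hi⟩, rfl⟩

theorem edgeVector_mem_coordSpan {s t : Finset ι} {p : ι × ι} (h₁ : p.1 ∈ s) (h₂ : p.2 ∈ t) :
    edgeVector K p ∈ coordSpan K s t := by
  have : edgeVector K p = (Pi.single p.1 1, 0) + (0, Pi.single p.2 1) := by simp [edgeVector]
  rw [this]
  exact add_mem (single_zero_mem_coordSpan t h₁) (subset_span ⟨Sum.inr ⟨p.2, h₂⟩, rfl⟩)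

variable [Fintype ι]

theorem coordSumDiff_edgeVector (p : ι × ι) : coordSumDiff K (edgeVector K p) = 0 := by
  simp [coordSumDiff_apply, edgeVector]

theorem coordSumDiff_single_zero (i : ι) :
    coordSumDiff K ((Pi.single i 1, 0) : (ι → K) × (ι → K)) = 1 := by
  simp [coordSumDiff_apply]

end EdgeVectors

section Laman

variable {K ι : Type*} [Field K] [Fintype ι] [LinearOrder ι]

theorem card_edges_le_two_mul_card_sub_three {T : Finset (ι × ι)} {W : Finset ι}
    (hW : 2 ≤ #W) (hT : ∀ p ∈ T, p.1 < p.2 ∧ p.1 ∈ W ∧ p.2 ∈ W)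
    (hind : LinearIndepOn K (edgeVector K) (T : Set (ι × ι))) : #T ≤ 2 * #W - 3 := by
  have hne : W.Nonempty := card_pos.mp (by omega)
  set U := coordSpan K (W.erase (W.max' hne)) (W.erase (W.min' hne))
  have hTU : ∀ p ∈ T, edgeVector K p ∈ U ⊓ LinearMap.ker (coordSumDiff K) := by
    intro p hp
    obtain ⟨hlt, h₁, h₂⟩ := hT p hp
    refine ⟨edgeVector_mem_coordSpan ?_ ?_, coordSumDiff_edgeVector p⟩
    · exact mem_erase.2 ⟨(hlt.trans_le (W.le_max' _ h₂)).ne, h₁⟩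
    · exact mem_erase.2 ⟨((W.min'_le _ h₁).trans_lt hlt).ne', h₂⟩
  have hmin : W.min' hne ∈ W.erase (W.max' hne) :=
    mem_erase.2 ⟨(W.min'_lt_max'_of_card (by omega)).ne, W.min'_mem hne⟩
  have hker : finrank K ↥(U ⊓ LinearMap.ker (coordSumDiff K)) < finrank K U :=
    finrank_inf_ker_lt (single_zero_mem_coordSpan _ hmin)
      (by rw [coordSumDiff_single_zero]; exact one_ne_zero)
  have hU : finrank K U ≤ (#W - 1) + (#W - 1) := by
    simpa only [card_erase_of_mem (W.max'_mem hne), card_erase_of_mem (W.min'_mem hne)]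
      using finrank_coordSpan_le (K := K) (W.erase (W.max' hne)) (W.erase (W.min' hne))
  have := hind.finset_card_le_finrank_of_forall_mem hTU
  omega

theorem card_filter_edges_le_two_mul_card_sub_three {S : Finset (ι × ι)}
    (hS : ∀ p ∈ S, p.1 < p.2) (hind : LinearIndepOn K (edgeVector K) (S : Set (ι × ι)))
    {W : Finset ι} (hW : 2 ≤ #W) :
    #(S.filter fun p => p.1 ∈ W ∧ p.2 ∈ W) ≤ 2 * #W - 3 := by
  refine card_edges_le_two_mul_card_sub_three hW (fun p hp => ?_) (hind.mono ?_)
  · rw [mem_filter] at hp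
    exact ⟨hS p hp.1, hp.2⟩
  · exact_mod_cast filter_subset _ S

theorem card_edges_le_two_mul_card_sub_three_of_linearIndepOn {S : Finset (ι × ι)}
    (hS : ∀ p ∈ S, p.1 < p.2) (hind : LinearIndepOn K (edgeVector K) (S : Set (ι × ι))) :
    #S ≤ 2 * Fintype.card ι - 3 := by
  by_cases hι : 2 ≤ Fintype.card ι
  · simpa using card_filter_edges_le_two_mul_card_sub_three hS hind (W := univ) hι
  · have : Subsingleton ι := Fintype.card_le_one_iff_subsingleton.mp (by omega)
    rw [eq_empty_of_forall_notMem fun p hp => (hS p hp).ne (Subsingleton.elim _ _)]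
    simp

end Laman

/-- if the vectors `e_i + f_j ∈ ℝⁿ ⊕ ℝⁿ`, `(i,j) ∈ S` (with
`i < j`), are linearly independent then `|S| ≤ 2n − 3` and every vertex subset
`W` with `|W| = k ≥ 2` spans at most `2k − 3` edges of `S`. -/
theorem stmt_14 (n : ℕ) (S : Finset (Fin n × Fin n)) (hS : ∀ p ∈ S, p.1 < p.2)
    (hind : LinearIndependent ℝ
      (fun p : S =>
        ((Pi.single (p : Fin n × Fin n).1 1, Pi.single (p : Fin n × Fin n).2 1) :
          (Fin n → ℝ) × (Fin n → ℝ)))) :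
    S.card ≤ 2 * n - 3 ∧
      ∀ W : Finset (Fin n), 2 ≤ W.card →
        (S.filter (fun p => p.1 ∈ W ∧ p.2 ∈ W)).card ≤ 2 * W.card - 3 := by
  have hind' : LinearIndepOn ℝ (edgeVector ℝ) (S : Set (Fin n × Fin n)) := hind
  exact ⟨by simpa using card_edges_le_two_mul_card_sub_three_of_linearIndepOn hS hind',
    fun W hW => card_filter_edges_le_two_mul_card_sub_three hS hind' hW⟩
end

section
/- Let x ∈ ℝ^{C(n,2)} be a vector indexed by pairs 1 ≤ i < j ≤ n. Then x lies in the row span of the matrix A_{Cat(n)}, whose rows are indexed by the edges of the caterpillar Cat(n) and whose column indexed by {i,j} is the 0/1 indicator of the path from leaf i to leaf j, if and only if x_{ik} + x_{jl} − x_{il} − x_{jk} = 0 for all i < j < k < l. -/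
/-- `x ∈ rowspan(A_{Cat(n)})` iff
`x_{ik} + x_{jl} = x_{il} + x_{jk}` for all `i < j < k < l`.  The row span of
`A_{Cat(n)}` (whose rows are indexed by the edges of the caterpillar `Cat(n)`
and whose column for the pair `{i,j}` indicates the edges on the leaf path from
`i` to `j`) consists exactly of the vectors of the form
`x i j = a i + a j + ∑_{m = pos i}^{pos j − 1} t m` where `a` gives arbitrary
coefficients on the leaf edges, `t` gives arbitrary coefficients on the
internal path edges `t_1, …, t_{n−3}`, and `pos i` is the internal path vertex
to which leaf `i` is attached (`pos 1 = pos 2 = 1`, `pos i = i − 1` for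
`3 ≤ i ≤ n−2`, `pos (n−1) = pos n = n−2`). -/
theorem stmt_15 (n : ℕ) (hn : 4 ≤ n)
    (pos : ℕ → ℕ)
    (hpos : ∀ i, pos i = if i ≤ 2 then 1 else if i ≤ n - 2 then i - 1 else n - 2)
    (x : ℕ → ℕ → ℝ) :
    (∃ a t : ℕ → ℝ, ∀ i j, 1 ≤ i → i < j → j ≤ n →
        x i j = a i + a j + ∑ m ∈ Finset.Ico (pos i) (pos j), t m) ↔
    (∀ i j k l, 1 ≤ i → i < j → j < k → k < l → l ≤ n →
        x i k + x j l = x i l + x j k) := by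
  have posm : ∀ i j : ℕ, i ≤ j → pos i ≤ pos j := by
    intro i j hij
    rw [hpos, hpos]
    split_ifs <;> omega
  have tel : ∀ (h : ℕ → ℝ) (u v : ℕ), u ≤ v →
      ∑ m ∈ Finset.Ico u v, (h (m + 2) - h (m + 1)) = h (v + 1) - h (u + 1) := by
    intro h u v huv
    induction v, huv using Nat.le_induction with
    | base => simp
    | succ v hv ih =>
      rw [Finset.sum_Ico_succ_top hv, ih]
      ring
  constructor
  · rintro ⟨a, t, hx⟩ i j k l h1 hij hjk hkl hln
    rw [hx i k (by omega) (by omega) (by omega),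
        hx j l (by omega) (by omega) (by omega),
        hx i l (by omega) (by omega) (by omega),
        hx j k (by omega) (by omega) (by omega)]
    have e1 : (∑ m ∈ Finset.Ico (pos i) (pos k), t m)
        + ∑ m ∈ Finset.Ico (pos k) (pos l), t m
        = ∑ m ∈ Finset.Ico (pos i) (pos l), t m :=
      Finset.sum_Ico_consecutive _ (posm i k (by omega)) (posm k l (by omega))
    have e2 : (∑ m ∈ Finset.Ico (pos j) (pos k), t m)
        + ∑ m ∈ Finset.Ico (pos k) (pos l), t m
        = ∑ m ∈ Finset.Ico (pos j) (pos l), t m :=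
      Finset.sum_Ico_consecutive _ (posm j k (by omega)) (posm k l (by omega))
    linarith
  · intro H
    set h : ℕ → ℝ := fun i => (x 1 i + x 1 n - x i n) / 2 with hh
    refine ⟨fun i => if i = 1 then h 2 else x 1 i - h (pos i + 1),
      fun m => h (m + 2) - h (m + 1), ?_⟩
    intro i j hi hij hjn
    rw [tel h _ _ (posm i j hij.le)]
    have hp1 : pos 1 = 1 := by rw [hpos]; norm_num
    rcases eq_or_lt_of_le hi with hi1 | hi2
    · -- i = 1
      subst hi1
      simp only [if_neg (by omega : j ≠ 1), hp1, reduceIte]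
      ring
    · -- 2 ≤ i
      have hpi : pos i + 1 = i := by rw [hpos i]; split_ifs <;> omega
      simp only [if_neg (by omega : i ≠ 1), if_neg (by omega : j ≠ 1), hpi]
      rcases eq_or_lt_of_le hjn with hjn' | hjn'
      · subst hjn'
        simp only [hh]
        ring
      · have key := H 1 i j n le_rfl (by omega) hij hjn' le_rfl
        simp only [hh]
        linarith
end
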